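/- arXiv:1008.3210 — 2 statements merged into one kernel-verified Lean document; each statement's English description precedes it below -/
import Mathlib

section
/- Let M be a von Neumann algebra, a ≥ 0 in M with support projection s(a) = 1, and u a unitary in M such that |u*au − a| ≥ a. Let e₊ be the support of the positive part (u*au − a)₊ and e₋ = 1 − e₊. Then e₋ u* a u e₋ = 0, and consequently e₊ = 1 and u*au ≥ 2a. -/
open scoped ComplexOrder

variable {H : Type*} [NormedAddCommGroup H] [InnerProductSpace ℂ H] [CompleteSpace H]

namespace CommutatorEstimates

/-- `p` is an (orthogonal) projection belonging to the von Neumann algebra `M`. -/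
def IsProj (M : VonNeumannAlgebra H) (p : H →L[ℂ] H) : Prop :=
  p ∈ M ∧ IsSelfAdjoint p ∧ p * p = p

/-- Order on projections: `p ≤ q` iff `p * q = p`. -/
def ProjLE (p q : H →L[ℂ] H) : Prop := p * q = p

/-- Strict order on projections. -/
def ProjLT (p q : H →L[ℂ] H) : Prop := ProjLE p q ∧ p ≠ q

/-- Murray–von Neumann equivalence of projections relative to `M`:
there is a partial isometry `v ∈ M` with `v*v = p` and `vv* = q`. -/
def MvNE (M : VonNeumannAlgebra H) (p q : H →L[ℂ] H) : Prop :=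
  ∃ v ∈ M, star v * v = p ∧ v * star v = q

/-- Murray–von Neumann subequivalence: `p` is equivalent to a subprojection of `q`. -/
def SubEquiv (M : VonNeumannAlgebra H) (p q : H →L[ℂ] H) : Prop :=
  ∃ r, IsProj M r ∧ ProjLE r q ∧ MvNE M p r

/-- Strict Murray–von Neumann subequivalence. -/
def StrictSubEquiv (M : VonNeumannAlgebra H) (p q : H →L[ℂ] H) : Prop :=
  SubEquiv M p q ∧ ¬ MvNE M p q

/-- `M` is a factor: its center reduces to the scalars. -/
def IsFactor (M : VonNeumannAlgebra H) : Prop :=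
  ∀ z ∈ M, (∀ y ∈ M, z * y = y * z) → ∃ c : ℂ, z = c • (1 : H →L[ℂ] H)

/-- An infinite projection: equivalent to a proper subprojection of itself. -/
def InfiniteProj (M : VonNeumannAlgebra H) (p : H →L[ℂ] H) : Prop :=
  IsProj M p ∧ ∃ q, IsProj M q ∧ ProjLE q p ∧ q ≠ p ∧ MvNE M p q

/-- The absolute value `|x| = (x*x)^{1/2}` of a bounded operator. -/
noncomputable def oabs (x : H →L[ℂ] H) : H →L[ℂ] H := CFC.sqrt (star x * x)

end CommutatorEstimates

namespace CommutatorEstimates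

/-- The positive part `x₊ = (|x| + x)/2` of an operator. -/
noncomputable def posPart' (x : H →L[ℂ] H) : H →L[ℂ] H := (2 : ℂ)⁻¹ • (oabs x + x)

/-!
Put `b = u*au − a`. Then `u*au = a + b ≤ |b| + b = 2 b₊`, and `u*au` is positive with trivial
kernel, hence so is `b₊`. An injective `b₊` can be cancelled on the left: `b₊ b₋ = 0` gives
`b₋ = 0`, so `|b| = b` and `a ≤ u*au − a`; and `b₊ (1 − e₊) = 0` gives `e₊ = 1`.
-/

open scoped InnerProductSpace

lemma posPart'_eq_posPart {b : H →L[ℂ] H} (hb : IsSelfAdjoint b) : posPart' b = b⁺ := by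
  rw [posPart', oabs, ← CFC.abs, CFC.abs_add_self b hb, ← Nat.cast_smul_eq_nsmul ℂ, smul_smul]
  norm_num

section PositiveOperator

variable {E : Type*} [NormedAddCommGroup E] [InnerProductSpace ℂ E] [CompleteSpace E]

lemma apply_eq_zero_of_re_inner_nonpos {T : E →L[ℂ] E} (hT : 0 ≤ T) {ξ : E}
    (h : RCLike.re ⟪T ξ, ξ⟫_ℂ ≤ 0) : T ξ = 0 := by
  set S := CFC.sqrt T
  have hSS : S * S = T := CFC.sqrt_mul_sqrt_self T hT
  have hS : IsSelfAdjoint S := CFC.sqrt_nonneg (a := T) |>.isSelfAdjoint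
  have hquad : ⟪T ξ, ξ⟫_ℂ = ⟪S ξ, S ξ⟫_ℂ := by
    rw [← hSS]
    exact ContinuousLinearMap.isSelfAdjoint_iff_isSymmetric.mp hS (S ξ) ξ
  have hSξ : S ξ = 0 := re_inner_self_nonpos.mp (hquad ▸ h)
  rw [← hSS, mul_apply_eq_comp, hSξ, map_zero]

lemma apply_eq_zero_of_le {S R : E →L[ℂ] E} (hS : 0 ≤ S) (hSR : S ≤ R) {ξ : E}
    (hR : R ξ = 0) : S ξ = 0 := by
  refine apply_eq_zero_of_re_inner_nonpos hS ?_
  have hRS := ((ContinuousLinearMap.nonneg_iff_isPositive _).mp (sub_nonneg.mpr hSR))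
    |>.re_inner_nonneg_left ξ
  rw [sub_apply, inner_sub_left, map_sub, hR, inner_zero_left, map_zero] at hRS
  linarith

lemma injective_star_mul_mul {a u : E →L[ℂ] E} (ha0 : 0 ≤ a) (ha : Function.Injective a)
    (hu : Function.Injective u) : Function.Injective (star u * a * u) := by
  refine (injective_iff_map_eq_zero _).mpr fun ξ hξ ↦ ?_
  have hquad : ⟪a (u ξ), u ξ⟫_ℂ = 0 := by
    rw [← ContinuousLinearMap.adjoint_inner_left, ← ContinuousLinearMap.star_eq_adjoint]
    simpa [mul_apply_eq_comp] using congr(⟪$hξ, ξ⟫_ℂ)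
  have hauξ : a (u ξ) = 0 := apply_eq_zero_of_re_inner_nonpos ha0 (by simp [hquad])
  exact (injective_iff_map_eq_zero u).mp hu ξ ((injective_iff_map_eq_zero a).mp ha _ hauξ)

end PositiveOperator

theorem support_argument_general
    {H : Type*} [NormedAddCommGroup H] [InnerProductSpace ℂ H] [CompleteSpace H]
    (a : H →L[ℂ] H) (ha0 : 0 ≤ a)
    -- the support projection of `a` is `1`, i.e. `a` has trivial kernel
    (hsupp : ∀ ξ : H, a ξ = 0 → ξ = 0)
    (u : H →L[ℂ] H) (hu1 : star u * u = 1)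
    (habs : a ≤ oabs (star u * a * u - a))
    -- `ep` is the support projection of `(u*au − a)₊`
    (ep : H →L[ℂ] H)
    (hps : posPart' (star u * a * u - a) * ep = posPart' (star u * a * u - a)) :
    (1 - ep) * (star u * a * u) * (1 - ep) = 0 ∧ ep = 1 ∧
      (2 : ℂ) • a ≤ star u * a * u := by
  set b := star u * a * u - a
  have hb : IsSelfAdjoint b := (ha0.isSelfAdjoint.conjugate' u).sub ha0.isSelfAdjoint
  have hT0 : 0 ≤ star u * a * u := star_left_conjugate_nonneg ha0 u
  have hT : Function.Injective (star u * a * u) :=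
    injective_star_mul_mul ha0 ((injective_iff_map_eq_zero a).mpr hsupp)
      (Function.LeftInverse.injective fun ξ ↦ by simpa using congr($hu1 ξ))
  have hT_le : star u * a * u ≤ 2 • b⁺ := calc
    star u * a * u = a + b := (add_sub_cancel a _).symm
    _ ≤ CFC.abs b + b := add_le_add_left habs b
    _ = 2 • b⁺ := CFC.abs_add_self b hb
  have hpos : Function.Injective (b⁺ : H →L[ℂ] H) := by
    refine (injective_iff_map_eq_zero b⁺).mpr fun ξ hξ ↦ ?_
    exact (injective_iff_map_eq_zero _).mp hT ξ (apply_eq_zero_of_le hT0 hT_le (by simp [hξ]))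
  have hneg : b⁻ = 0 :=
    ContinuousLinearMap.cancel_left hpos ((CFC.posPart_mul_negPart b).trans (mul_zero _).symm :)
  rw [posPart'_eq_posPart hb] at hps
  have hep : ep = 1 := by
    have hker : b⁺ * (1 - ep) = b⁺ * 0 := by rw [mul_sub, mul_one, hps, sub_self, mul_zero]
    exact (sub_eq_zero.mp (ContinuousLinearMap.cancel_left hpos hker)).symm
  refine ⟨by simp [hep], hep, ?_⟩
  have habs_eq : CFC.abs b = b := by
    rw [← CFC.posPart_add_negPart b hb, hneg, add_zero]
    simpa [hneg] using CFC.posPart_sub_negPart b hb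
  rw [two_smul]
  exact add_le_of_le_sub_right (habs.trans_eq habs_eq)

/-- **Support argument.** Let `a ≥ 0` in `M` with full support, `u ∈ M` unitary with
`|u*au − a| ≥ a`, and let `e₊` be the support projection of `(u*au − a)₊`,
`e₋ = 1 − e₊`.  Then `e₋ u*au e₋ = 0`, hence `e₊ = 1` and `u*au ≥ 2a`. -/
theorem support_argument
    {H : Type*} [NormedAddCommGroup H] [InnerProductSpace ℂ H] [CompleteSpace H]
    (M : VonNeumannAlgebra H)
    (a : H →L[ℂ] H) (haM : a ∈ M) (ha0 : 0 ≤ a)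
    -- the support projection of `a` is `1`, i.e. `a` has trivial kernel
    (hsupp : ∀ ξ : H, a ξ = 0 → ξ = 0)
    (u : H →L[ℂ] H) (huM : u ∈ M) (hu1 : star u * u = 1) (hu2 : u * star u = 1)
    (habs : a ≤ oabs (star u * a * u - a))
    -- `ep` is the support projection of `(u*au − a)₊`
    (ep : H →L[ℂ] H) (hep : IsProj M ep)
    (hps : posPart' (star u * a * u - a) * ep = posPart' (star u * a * u - a))
    (hmin : ∀ f, IsProj M f →
      posPart' (star u * a * u - a) * f = posPart' (star u * a * u - a) →
      ProjLE ep f) :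
    (1 - ep) * (star u * a * u) * (1 - ep) = 0 ∧ ep = 1 ∧
      (2 : ℂ) • a ≤ star u * a * u :=
  support_argument_general a ha0 hsupp u hu1 habs ep hps

end CommutatorEstimates
end

section
/- Let M be a von Neumann algebra and a ≥ 0 a nonzero bounded element with support projection s(a) = 1. Then there is no unitary u ∈ M with |u*au − a| ≥ a. -/
open scoped ComplexOrder

variable {H : Type*} [NormedAddCommGroup H] [InnerProductSpace ℂ H] [CompleteSpace H]

/-! Put `b = u*au - a` and `c = b⁻`. Since `|b| = b + 2c` and `cb = -c²`, conjugating `a ≤ |b|`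
by `c` gives `cac ≤ c³`, hence `(uc)* a (uc) = cac + cbc ≤ 0`. As `a` has trivial kernel this
forces `uc = 0`, so `c = 0` and `b ≥ 0`. Then `|b| = b`, i.e. `2a ≤ u*au`, which is impossible
for `a ≠ 0` because `‖u*au‖ = ‖a‖`. -/

namespace CommutatorEstimates

section CStarAlgebra

variable {A : Type*} [CStarAlgebra A]

lemma negPart_mul_self {b : A} (hb : IsSelfAdjoint b) :
    b⁻ * b = -(b⁻ * b⁻) := by
  conv_lhs => arg 2; rw [← CFC.posPart_sub_negPart b hb]
  rw [mul_sub, CFC.negPart_mul_posPart, zero_sub]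

variable [PartialOrder A] [StarOrderedRing A]

lemma negPart_mul_mul_negPart_eq_zero_of_le_abs {a x : A} (ha : IsSelfAdjoint a) (hx : 0 ≤ x)
    (h : a ≤ CFC.abs (x - a)) : (x - a)⁻ * x * (x - a)⁻ = 0 := by
  have hb : IsSelfAdjoint (x - a) := hx.isSelfAdjoint.sub ha
  generalize hb_def : x - a = b at h hb ⊢
  have hc : IsSelfAdjoint b⁻ := (CFC.negPart_nonneg b).isSelfAdjoint
  have hcbc : b⁻ * b * b⁻ = -(b⁻ * b⁻ * b⁻) := by
    rw [negPart_mul_self hb, neg_mul]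
  have habs : CFC.abs b = b + (b⁻ + b⁻) := by
    rw [← sub_eq_iff_eq_add', CFC.abs_sub_self b hb, two_smul]
  have hcac : b⁻ * a * b⁻ ≤ b⁻ * b⁻ * b⁻ := by
    have h' := star_left_conjugate_le_conjugate h b⁻
    rw [hc.star_eq, habs] at h'
    calc b⁻ * a * b⁻ ≤ b⁻ * (b + (b⁻ + b⁻)) * b⁻ := h'
      _ = b⁻ * b * b⁻ + (b⁻ * b⁻ * b⁻ + b⁻ * b⁻ * b⁻) := by noncomm_ring
      _ = b⁻ * b⁻ * b⁻ := by rw [hcbc]; abel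
  have hcxc : b⁻ * x * b⁻ = b⁻ * a * b⁻ - b⁻ * b⁻ * b⁻ := by
    rw [sub_eq_iff_eq_add.mp hb_def, add_comm, mul_add, add_mul, hcbc, sub_eq_add_neg]
  refine le_antisymm ?_ ?_
  · rw [hcxc, sub_nonpos]
    exact hcac
  · simpa only [hc.star_eq] using star_left_conjugate_nonneg hx b⁻

lemma mul_eq_zero_of_star_mul_mul_eq_zero {x y : A} (hx : 0 ≤ x) (h : star y * x * y = 0) :
    x * y = 0 := by
  have hsqrt : star (CFC.sqrt x * y) * (CFC.sqrt x * y) = star y * x * y := by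
    rw [star_mul, (CFC.sqrt_nonneg x).isSelfAdjoint.star_eq, mul_assoc,
      ← mul_assoc (CFC.sqrt x), CFC.sqrt_mul_sqrt_self x, ← mul_assoc]
  have h0 : CFC.sqrt x * y = 0 := by
    rw [← CStarRing.star_mul_self_eq_zero_iff, hsqrt, h]
  rw [← CFC.sqrt_mul_sqrt_self x, mul_assoc, h0, mul_zero]

lemma eq_zero_of_add_le_star_mul_mul {a u : A} (ha : 0 ≤ a) (hu : u ∈ unitary A)
    (h : a + a ≤ star u * a * u) : a = 0 := by
  have hnorm : ‖a + a‖ ≤ ‖a‖ := by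
    calc ‖a + a‖ ≤ ‖star u * a * u‖ :=
          CStarAlgebra.norm_le_norm_of_nonneg_of_le (by positivity) h
      _ = ‖a‖ := by
        rw [CStarRing.norm_mul_mem_unitary _ hu,
          CStarRing.norm_mem_unitary_mul _ (Unitary.star_mem hu)]
  rw [← two_smul ℝ a, norm_smul] at hnorm
  norm_num at hnorm
  exact norm_le_zero_iff.mp (by linarith)

end CStarAlgebra

lemma eq_zero_of_star_mul_mul_eq_zero {a y : H →L[ℂ] H} (ha : 0 ≤ a)
    (hker : ∀ ξ : H, a ξ = 0 → ξ = 0) (h : star y * a * y = 0) : y = 0 := by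
  have hay := mul_eq_zero_of_star_mul_mul_eq_zero ha h
  ext ξ
  exact hker _ (by simpa using congr($hay ξ))

theorem no_unitary_dominates_general
    {H : Type*} [NormedAddCommGroup H] [InnerProductSpace ℂ H] [CompleteSpace H]
    (M : VonNeumannAlgebra H)
    (a : H →L[ℂ] H) (ha0 : 0 ≤ a) (hane : a ≠ 0)
    -- the support projection of `a` is `1`, i.e. `a` has trivial kernel
    (hsupp : ∀ ξ : H, a ξ = 0 → ξ = 0) :
    ¬ ∃ u ∈ M, star u * u = 1 ∧ u * star u = 1 ∧
        a ≤ oabs (star u * a * u - a) := by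
  rintro ⟨u, -, huu, huu', hle⟩
  have hconj : 0 ≤ star u * a * u := star_left_conjugate_nonneg ha0 u
  have hc : (star u * a * u - a)⁻ = 0 := by
    have hcc := negPart_mul_mul_negPart_eq_zero_of_le_abs ha0.isSelfAdjoint hconj hle
    have hc_sa := (CFC.negPart_nonneg (star u * a * u - a)).isSelfAdjoint
    generalize (star u * a * u - a)⁻ = c at hcc hc_sa ⊢
    have huc : u * c = 0 := eq_zero_of_star_mul_mul_eq_zero ha0 hsupp <| by
      rw [← hcc, star_mul, hc_sa.star_eq]
      noncomm_ring
    rw [← one_mul c, ← huu, mul_assoc, huc, mul_zero]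
  have hb : 0 ≤ star u * a * u - a :=
    CStarAlgebra.nonneg_iff_isSelfAdjoint_and_negPart_eq_zero.mpr
      ⟨hconj.isSelfAdjoint.sub ha0.isSelfAdjoint, hc⟩
  rw [oabs, ← CFC.abs, CFC.abs_of_nonneg _ hb, le_sub_iff_add_le] at hle
  exact hane (eq_zero_of_add_le_star_mul_mul ha0 ⟨huu, huu'⟩ hle)

/-- **No unitary improves on a fully supported positive element.** If `a ≥ 0`,
`a ≠ 0`, has support projection `1` in the von Neumann algebra `M`, then no unitary
`u ∈ M` satisfies `|u*au − a| ≥ a`. -/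
theorem no_unitary_dominates
    {H : Type*} [NormedAddCommGroup H] [InnerProductSpace ℂ H] [CompleteSpace H]
    (M : VonNeumannAlgebra H)
    (a : H →L[ℂ] H) (haM : a ∈ M) (ha0 : 0 ≤ a) (hane : a ≠ 0)
    -- the support projection of `a` is `1`, i.e. `a` has trivial kernel
    (hsupp : ∀ ξ : H, a ξ = 0 → ξ = 0) :
    ¬ ∃ u ∈ M, star u * u = 1 ∧ u * star u = 1 ∧
        a ≤ oabs (star u * a * u - a) :=
  no_unitary_dominates_general M a ha0 hane hsupp

end CommutatorEstimates
end
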